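/- Let K ⊆ ℝⁿ be a compact set and X ⊆ K a finite nonempty set whose vanishing ideal I(X) ⊆ ℝ[x₁,…,x_n] is generated by polynomials of total degree at most g. Let d ≥ 2g, let τ be a probability measure on K, let φ₁,…,φ_T be a basis of the polynomials of degree at most d that is orthonormal in L²(τ), let μ be a positive discrete measure supported on X, let ε ∈ ℝ^T with ‖ε‖₂ ≤ δ and y_i := ∫_K φ_i dμ + ε_i. Then there exist constants C_a > 0 and 0 < C_b < 1, depending only on X (and K and the generators) and not on μ, δ, ε, such that, setting c₀ := √(C_b/C_a), every discrete signed measure Δ̂ = Σ_z Δ̂(z) δ_z attaining the minimum of ‖ν‖_TV over all finite signed Borel measures ν with ‖(∫_K φ_i dν − y_i)_i‖₂ ≤ δ satisfies: (1) every z with Δ̂(z) > 2δ/C_b has d(z,X) ≤ c₀; (2) Σ_{z : d(z,X) ≤ c₀, Δ̂(z) > 0} Δ̂(z)·d(z,X)² ≤ 2δ/C_a, Σ_{z : d(z,X) ≥ c₀, Δ̂(z) > 0} Δ̂(z) ≤ 2δ/C_b, and Σ_{z : Δ̂(z) < 0} |Δ̂(z)| ≤ 2δ. -/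

import Mathlib

/-!
By compactness of `K`, the generators satisfy a quadratic isolation condition
`d(z, X)² ≤ C ∑ᵢ fᵢ(z)²` on `K`. Near `x ∈ X` it comes from the ideal elements
`(Xⱼ - xⱼ) · L`, where `L = ∏_{b ∈ X \ {x}} ‖X - b‖²` does not vanish at `x`, since the squares of
these elements sum to `‖z - x‖² L(z)²`; away from `X` it comes from `∑ᵢ fᵢ² > 0` off the common
zero set `X` of the generators. Hence `q = 1 - t ∑ᵢ fᵢ²`, of degree `≤ 2g ≤ d`, is a dual
certificate: `q = 1` on `X`, `q ≥ 0` on `K` and `1 - q ≥ C_a d(·, X)²` on `K`.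

Writing `q = ∑ aᵢ φᵢ`, orthonormality gives `‖a‖₂² = ∫ q² dτ ≤ 1`. Since `μ` is feasible, optimality
of `Δ̂` and Cauchy–Schwarz against two moment vectors within `δ` of `y` give
`∑_z (|Δ̂(z)| - Δ̂(z) q(z)) ≤ ∫ q dμ - ∫ q dΔ̂ ≤ 2δ`. Every summand is nonnegative and dominates
`C_a Δ̂(z) d(z, X)²` at positive atoms and `|Δ̂(z)|` at negative ones, which yields all four bounds.
-/

open MeasureTheory

noncomputable section

/-- Evaluation of a multivariate polynomial at a point of Euclidean space. -/
noncomputable def peval {n : ℕ} (f : MvPolynomial (Fin n) ℝ) (z : EuclideanSpace ℝ (Fin n)) : ℝ :=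
  MvPolynomial.eval (fun j => z j) f

/-- Integration of a real function against a finite signed Borel measure,
via the Jordan decomposition `ν = ν₊ − ν₋`. -/
noncomputable def sint {α : Type*} [MeasurableSpace α] (ν : SignedMeasure α) (f : α → ℝ) : ℝ :=
  ∫ x, f x ∂ν.toJordanDecomposition.posPart - ∫ x, f x ∂ν.toJordanDecomposition.negPart

/-- The total variation norm `‖ν‖_TV = ν₊(K) + ν₋(K)` of a finite signed measure. -/
noncomputable def tvNorm {α : Type*} [MeasurableSpace α] (ν : SignedMeasure α) : ℝ :=
  (ν.totalVariation Set.univ).toReal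

/-- The discrete signed measure `Σ_{z ∈ Z} w z · δ_z`. -/
noncomputable def discSM {n : ℕ} (Z : Finset (EuclideanSpace ℝ (Fin n)))
    (w : EuclideanSpace ℝ (Fin n) → ℝ) : SignedMeasure (EuclideanSpace ℝ (Fin n)) :=
  ∑ z ∈ Z, w z • (Measure.dirac z).toSignedMeasure

/-- Feasibility for the BLASSO problem: `ν` is a signed measure on `K` whose moment
vector against `φ` is within `δ` of `y` in the Euclidean norm. -/
def BlassoFeasible {n T : ℕ} (K : Set (EuclideanSpace ℝ (Fin n)))
    (φ : Fin T → MvPolynomial (Fin n) ℝ) (y : Fin T → ℝ) (δ : ℝ)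
    (ν : SignedMeasure (EuclideanSpace ℝ (Fin n))) : Prop :=
  ν.totalVariation Kᶜ = 0 ∧ Real.sqrt (∑ i, (sint ν (peval (φ i)) - y i) ^ 2) ≤ δ

section DiracSum

variable {α : Type*} [MeasurableSpace α]

def diracSum (Z : Finset α) (w : α → ℝ) : Measure α :=
  ∑ z ∈ Z, ENNReal.ofReal (w z) • Measure.dirac z

lemma diracSum_apply (Z : Finset α) (w : α → ℝ) {A : Set α} (hA : MeasurableSet A) :
    diracSum Z w A = ∑ z ∈ Z, ENNReal.ofReal (w z) * A.indicator 1 z := by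
  simp [diracSum, Measure.dirac_apply' _ hA]

instance (Z : Finset α) (w : α → ℝ) : IsFiniteMeasure (diracSum Z w) := by
  refine ⟨?_⟩
  rw [diracSum_apply Z w MeasurableSet.univ]
  exact ENNReal.sum_lt_top.2 fun z _ => by simp

lemma diracSum_apply_eq_zero {Z : Finset α} {w : α → ℝ} {A : Set α} (hA : MeasurableSet A)
    (hw : ∀ z ∈ Z, z ∈ A → w z ≤ 0) : diracSum Z w A = 0 := by
  rw [diracSum_apply Z w hA]
  refine Finset.sum_eq_zero fun z hz => ?_
  by_cases hzA : z ∈ A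
  · simp [ENNReal.ofReal_eq_zero.2 (hw z hz hzA)]
  · simp [hzA]

variable [MeasurableSingletonClass α]

lemma integral_diracSum (Z : Finset α) (w : α → ℝ) (f : α → ℝ) :
    ∫ x, f x ∂diracSum Z w = ∑ z ∈ Z, max (w z) 0 * f z := by
  rw [diracSum, integral_finsetSum_measure]
  · simp [integral_smul_measure, ENNReal.toReal_ofReal']
  · exact fun z _ => (integrable_dirac enorm_lt_top).smul_measure ENNReal.ofReal_ne_top

def diracSumJordan (Z : Finset α) (w : α → ℝ) : JordanDecomposition α where
  posPart := diracSum Z w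
  negPart := diracSum Z (-w)
  mutuallySingular := by
    refine ⟨(↑(Z.filter fun z => 0 < w z))ᶜ, (Finset.measurableSet _).compl,
      diracSum_apply_eq_zero (Finset.measurableSet _).compl fun z hz hzA => ?_,
      diracSum_apply_eq_zero (Finset.measurableSet _).compl.compl fun z hz hzA => ?_⟩
    · simpa [hz] using hzA
    · rw [compl_compl, Finset.mem_coe, Finset.mem_filter] at hzA
      simpa using hzA.2.le

lemma toJordanDecomposition_sum_dirac (Z : Finset α) (w : α → ℝ) :
    (∑ z ∈ Z, w z • (Measure.dirac z).toSignedMeasure).toJordanDecomposition =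
      diracSumJordan Z w := by
  refine SignedMeasure.toJordanDecomposition_eq ?_
  ext A hA
  rw [JordanDecomposition.toSignedMeasure, sub_apply,
    Measure.toSignedMeasure_apply_measurable hA, Measure.toSignedMeasure_apply_measurable hA]
  simp only [diracSumJordan, ← integral_indicator_one hA, integral_diracSum,
    ← Finset.sum_sub_distrib, ← sub_mul, Pi.neg_apply, max_zero_sub_max_neg_zero_eq_self, sum_apply]
  refine Finset.sum_congr rfl fun z _ => ?_
  by_cases hzA : z ∈ A <;>
    simp [Measure.toSignedMeasure_apply_measurable hA, Measure.real, Measure.dirac_apply' _ hA, hzA]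

lemma sint_sum_dirac (Z : Finset α) (w : α → ℝ) (f : α → ℝ) :
    sint (∑ z ∈ Z, w z • (Measure.dirac z).toSignedMeasure) f = ∑ z ∈ Z, w z * f z := by
  simp only [sint, toJordanDecomposition_sum_dirac, diracSumJordan, integral_diracSum,
    ← Finset.sum_sub_distrib, ← sub_mul, Pi.neg_apply, max_zero_sub_max_neg_zero_eq_self]

lemma totalVariation_sum_dirac (Z : Finset α) (w : α → ℝ) :
    (∑ z ∈ Z, w z • (Measure.dirac z).toSignedMeasure).totalVariation =
      diracSum Z w + diracSum Z (-w) := by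
  rw [SignedMeasure.totalVariation, toJordanDecomposition_sum_dirac]; rfl

lemma tvNorm_sum_dirac (Z : Finset α) (w : α → ℝ) :
    tvNorm (∑ z ∈ Z, w z • (Measure.dirac z).toSignedMeasure) = ∑ z ∈ Z, |w z| := by
  rw [tvNorm, totalVariation_sum_dirac, Measure.add_apply, ENNReal.toReal_add (measure_ne_top _ _)
    (measure_ne_top _ _)]
  simp only [← measureReal_def, ← integral_indicator_one MeasurableSet.univ, integral_diracSum,
    ← Finset.sum_add_distrib, ← add_mul, Pi.neg_apply, max_zero_add_max_neg_zero_eq_abs_self]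
  simp

lemma totalVariation_sum_dirac_compl {Z : Finset α} {K : Set α} (hK : MeasurableSet K)
    (hZK : ↑Z ⊆ K) (w : α → ℝ) :
    (∑ z ∈ Z, w z • (Measure.dirac z).toSignedMeasure).totalVariation Kᶜ = 0 := by
  have hZ : ∀ v : α → ℝ, diracSum Z v Kᶜ = 0 := fun v =>
    diracSum_apply_eq_zero hK.compl fun z hz hzK => absurd (hZK hz) hzK
  rw [totalVariation_sum_dirac, Measure.add_apply, hZ, hZ, add_zero]

end DiracSum

open Filter Topology

section Domination

variable {E : Type*} [TopologicalSpace E] {F S : E → ℝ}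

lemma exists_const_eventually_le_mul {A B : E → ℝ} {z : E} (hA : ContinuousAt A z)
    (hB : ContinuousAt B z) (hAz : 0 < A z) (hS : ∀ y, 0 ≤ S y)
    (h : ∀ᶠ y in 𝓝 z, F y * A y ≤ B y * S y) :
    ∃ C, ∀ᶠ y in 𝓝 z, F y ≤ C * S y := by
  refine ⟨2 * (|B z| + 1) / A z, ?_⟩
  filter_upwards [h, hA.eventually (lt_mem_nhds (half_lt_self hAz)),
    hB.eventually (gt_mem_nhds (lt_of_le_of_lt (le_abs_self (B z)) (lt_add_one _)))]
    with y hy hAy hBy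
  have hBS : B y * S y ≤ (|B z| + 1) * S y := mul_le_mul_of_nonneg_right hBy.le (hS y)
  rw [div_mul_eq_mul_div, le_div_iff₀ hAz]
  rcases le_or_gt (F y) 0 with hF | hF
  · nlinarith [hS y, abs_nonneg (B z)]
  · nlinarith

lemma IsCompact.exists_forall_le_mul_of_eventually {K : Set E} (hK : IsCompact K)
    (hS : ∀ y, 0 ≤ S y) (hloc : ∀ z ∈ K, ∃ C, ∀ᶠ y in 𝓝 z, F y ≤ C * S y) :
    ∃ C, ∀ y ∈ K, F y ≤ C * S y := by
  refine hK.induction_on (p := fun s => ∃ C, ∀ y ∈ s, F y ≤ C * S y) ⟨0, by simp⟩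
    (fun s t hst ⟨C, hC⟩ => ⟨C, fun y hy => hC y (hst hy)⟩)
    (fun s t ⟨C₁, h₁⟩ ⟨C₂, h₂⟩ => ⟨max C₁ C₂, fun y hy => ?_⟩)
    (fun z hz => ?_)
  · rcases hy with hy | hy
    · exact (h₁ y hy).trans (mul_le_mul_of_nonneg_right (le_max_left _ _) (hS y))
    · exact (h₂ y hy).trans (mul_le_mul_of_nonneg_right (le_max_right _ _) (hS y))
  · obtain ⟨C, hC⟩ := hloc z hz
    exact ⟨_, mem_nhdsWithin_of_mem_nhds hC, C, fun y hy => hy⟩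

end Domination

section Polynomials

variable {n : ℕ}

lemma continuous_peval (f : MvPolynomial (Fin n) ℝ) : Continuous (peval f) :=
  (MvPolynomial.continuous_eval f).comp (continuous_pi fun j => (EuclideanSpace.proj j).continuous)

def sumSq {s : ℕ} (f : Fin s → MvPolynomial (Fin n) ℝ) : MvPolynomial (Fin n) ℝ :=
  ∑ i, f i ^ 2

lemma peval_sumSq {s : ℕ} (f : Fin s → MvPolynomial (Fin n) ℝ) (z : EuclideanSpace ℝ (Fin n)) :
    peval (sumSq f) z = ∑ i, peval (f i) z ^ 2 := by
  simp [sumSq, peval]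

lemma peval_sumSq_nonneg {s : ℕ} (f : Fin s → MvPolynomial (Fin n) ℝ)
    (z : EuclideanSpace ℝ (Fin n)) : 0 ≤ peval (sumSq f) z := by
  rw [peval_sumSq]; positivity

lemma totalDegree_sumSq_le {s g : ℕ} {f : Fin s → MvPolynomial (Fin n) ℝ}
    (hf : ∀ i, (f i).totalDegree ≤ g) : (sumSq f).totalDegree ≤ 2 * g :=
  MvPolynomial.totalDegree_finsetSum_le fun i _ =>
    (MvPolynomial.totalDegree_pow _ _).trans (by linarith [hf i])

lemma peval_sumSq_eq_zero {s : ℕ} {f : Fin s → MvPolynomial (Fin n) ℝ}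
    {z : EuclideanSpace ℝ (Fin n)} (hf : ∀ i, peval (f i) z = 0) : peval (sumSq f) z = 0 := by
  simp [peval_sumSq, hf]

lemma exists_continuous_sq_peval_le_of_mem_span {s : ℕ} {f : Fin s → MvPolynomial (Fin n) ℝ}
    {h : MvPolynomial (Fin n) ℝ} (hh : h ∈ Ideal.span (Set.range f)) :
    ∃ G : EuclideanSpace ℝ (Fin n) → ℝ, Continuous G ∧
      ∀ z, peval h z ^ 2 ≤ G z * peval (sumSq f) z := by
  obtain ⟨a, rfl⟩ := Ideal.mem_span_range_iff_exists_fun.1 hh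
  refine ⟨fun z => ∑ i, peval (a i) z ^ 2,
    continuous_finsetSum _ fun i _ => (continuous_peval (a i)).pow 2, fun z => ?_⟩
  rw [peval_sumSq]
  simpa [peval] using Finset.sum_mul_sq_le_sq_mul_sq Finset.univ
    (fun i => peval (a i) z) (fun i => peval (f i) z)

def distSqPoly (b : EuclideanSpace ℝ (Fin n)) : MvPolynomial (Fin n) ℝ :=
  ∑ j, (MvPolynomial.X j - MvPolynomial.C (b j)) ^ 2

lemma peval_distSqPoly (b z : EuclideanSpace ℝ (Fin n)) :
    peval (distSqPoly b) z = dist z b ^ 2 := by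
  rw [EuclideanSpace.dist_eq, Real.sq_sqrt (by positivity)]
  simp [distSqPoly, peval, Real.dist_eq]

lemma peval_X_sub_C_mul (j : Fin n) (b : EuclideanSpace ℝ (Fin n)) (p : MvPolynomial (Fin n) ℝ)
    (z : EuclideanSpace ℝ (Fin n)) :
    peval ((MvPolynomial.X j - MvPolynomial.C (b j)) * p) z = (z j - b j) * peval p z := by
  simp [peval]

def vanishingPoly (S : Finset (EuclideanSpace ℝ (Fin n))) : MvPolynomial (Fin n) ℝ :=
  ∏ b ∈ S, distSqPoly b

lemma peval_vanishingPoly_eq_zero_iff {S : Finset (EuclideanSpace ℝ (Fin n))}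
    {z : EuclideanSpace ℝ (Fin n)} : peval (vanishingPoly S) z = 0 ↔ z ∈ S := by
  have : peval (vanishingPoly S) z = ∏ b ∈ S, dist z b ^ 2 := by
    simp only [← peval_distSqPoly, vanishingPoly, peval, map_prod]
  simp [this, Finset.prod_eq_zero_iff]

end Polynomials

section QuadraticIsolation

variable {n s : ℕ} {f : Fin s → MvPolynomial (Fin n) ℝ} {X : Finset (EuclideanSpace ℝ (Fin n))}

lemma peval_sumSq_pos_of_notMem
    (hfgen : ∀ q : MvPolynomial (Fin n) ℝ, (∀ x ∈ X, peval q x = 0) →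
      q ∈ Ideal.span (Set.range f))
    {z : EuclideanSpace ℝ (Fin n)} (hz : z ∉ X) : 0 < peval (sumSq f) z := by
  obtain ⟨G, -, hG⟩ := exists_continuous_sq_peval_le_of_mem_span
    (hfgen (vanishingPoly X) fun x hx => peval_vanishingPoly_eq_zero_iff.2 hx)
  refine (peval_sumSq_nonneg f z).lt_of_ne fun h0 => hz ?_
  refine peval_vanishingPoly_eq_zero_iff.1 (pow_eq_zero_iff two_ne_zero |>.1 ?_)
  exact le_antisymm (by simpa [← h0] using hG z) (sq_nonneg _)

lemma eventually_sq_infDist_le_mul_sumSq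
    (hfgen : ∀ q : MvPolynomial (Fin n) ℝ, (∀ x ∈ X, peval q x = 0) →
      q ∈ Ideal.span (Set.range f))
    {x : EuclideanSpace ℝ (Fin n)} (hx : x ∈ X) :
    ∃ C, ∀ᶠ z in 𝓝 x, Metric.infDist z X ^ 2 ≤ C * peval (sumSq f) z := by
  set L := vanishingPoly (X.erase x)
  have hmem : ∀ j, (MvPolynomial.X j - MvPolynomial.C (x j)) * L ∈ Ideal.span (Set.range f) := by
    refine fun j => hfgen _ fun x' hx' => ?_
    rw [peval_X_sub_C_mul]
    by_cases hxx : x' = x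
    · simp [hxx]
    · rw [peval_vanishingPoly_eq_zero_iff.2 (Finset.mem_erase.2 ⟨hxx, hx'⟩), mul_zero]
  choose G hGc hG using fun j => exists_continuous_sq_peval_le_of_mem_span (hmem j)
  refine exists_const_eventually_le_mul (A := fun z => peval L z ^ 2) (B := fun z => ∑ j, G j z)
    ((continuous_peval L).pow 2).continuousAt
    (continuous_finsetSum _ fun j _ => hGc j).continuousAt ?_ (peval_sumSq_nonneg f)
    (Eventually.of_forall fun z => ?_)
  · have : peval L x ≠ 0 := fun h => by simpa using peval_vanishingPoly_eq_zero_iff.1 h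
    positivity
  · have hdist : dist z x ^ 2 * peval L z ^ 2 =
        ∑ j, peval ((MvPolynomial.X j - MvPolynomial.C (x j)) * L) z ^ 2 := by
      simp only [peval_X_sub_C_mul, mul_pow, ← Finset.sum_mul, ← peval_distSqPoly, distSqPoly]
      simp [peval]
    calc Metric.infDist z X ^ 2 * peval L z ^ 2 ≤ dist z x ^ 2 * peval L z ^ 2 := by
          gcongr
          · exact Metric.infDist_nonneg
          · exact Metric.infDist_le_dist_of_mem (by simpa using hx)
      _ ≤ ∑ j, G j z * peval (sumSq f) z := hdist ▸ Finset.sum_le_sum fun j _ => hG j z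
      _ = (∑ j, G j z) * peval (sumSq f) z := (Finset.sum_mul ..).symm

lemma IsCompact.exists_sq_infDist_le_mul_sumSq {K : Set (EuclideanSpace ℝ (Fin n))}
    (hK : IsCompact K)
    (hfgen : ∀ q : MvPolynomial (Fin n) ℝ, (∀ x ∈ X, peval q x = 0) →
      q ∈ Ideal.span (Set.range f)) :
    ∃ C, 0 < C ∧ ∀ z ∈ K, Metric.infDist z X ^ 2 ≤ C * peval (sumSq f) z := by
  obtain ⟨C, hC⟩ := hK.exists_forall_le_mul_of_eventually
    (F := fun z => Metric.infDist z X ^ 2) (peval_sumSq_nonneg f) fun z _ => by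
    by_cases hz : z ∈ X
    · exact eventually_sq_infDist_le_mul_sumSq hfgen hz
    · exact exists_const_eventually_le_mul (continuous_peval _).continuousAt
        ((Metric.continuous_infDist_pt _).pow 2).continuousAt (peval_sumSq_pos_of_notMem hfgen hz)
        (peval_sumSq_nonneg f) (Eventually.of_forall fun _ => le_rfl)
  refine ⟨max C 1, by positivity, fun z hz => (hC z hz).trans ?_⟩
  exact mul_le_mul_of_nonneg_right (le_max_left _ _) (peval_sumSq_nonneg f z)

lemma exists_dual_certificate {g : ℕ} {K : Set (EuclideanSpace ℝ (Fin n))} (hK : IsCompact K)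
    (hfdeg : ∀ i, (f i).totalDegree ≤ g) (hfvan : ∀ i, ∀ x ∈ X, peval (f i) x = 0)
    (hfgen : ∀ q : MvPolynomial (Fin n) ℝ, (∀ x ∈ X, peval q x = 0) →
      q ∈ Ideal.span (Set.range f)) :
    ∃ Ca : ℝ, 0 < Ca ∧ ∃ q : MvPolynomial (Fin n) ℝ, q.totalDegree ≤ 2 * g ∧
      (∀ x ∈ X, peval q x = 1) ∧
      ∀ z ∈ K, 0 ≤ peval q z ∧ Ca * Metric.infDist z X ^ 2 ≤ 1 - peval q z := by
  obtain ⟨C, hC, hqic⟩ := hK.exists_sq_infDist_le_mul_sumSq hfgen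
  obtain ⟨M, hM⟩ := hK.exists_bound_of_continuousOn (continuous_peval (sumSq f)).continuousOn
  set t := (max M 1)⁻¹
  have ht : 0 < t := by positivity
  have hq : ∀ z, peval (1 - t • sumSq f) z = 1 - t * peval (sumSq f) z := fun z => by
    simp [peval]
  refine ⟨t / C, by positivity, 1 - t • sumSq f, ?_, fun x hx => ?_, fun z hz => ⟨?_, ?_⟩⟩
  · refine (MvPolynomial.totalDegree_sub _ _).trans (max_le (by simp) ?_)
    exact (MvPolynomial.totalDegree_smul_le _ _).trans (totalDegree_sumSq_le hfdeg)
  · rw [hq, peval_sumSq_eq_zero fun i => hfvan i x hx, mul_zero, sub_zero]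
  · have hMz : peval (sumSq f) z ≤ max M 1 :=
      (le_abs_self _).trans ((hM z hz).trans (le_max_left _ _))
    rw [hq, sub_nonneg]
    calc t * peval (sumSq f) z ≤ t * max M 1 := by gcongr
      _ = 1 := inv_mul_cancel₀ (by positivity)
  · rw [hq, sub_sub_cancel, div_mul_eq_mul_div, div_le_iff₀ hC, mul_assoc,
      mul_comm (peval _ z)]
    exact mul_le_mul_of_nonneg_left (hqic z hz) ht.le

end QuadraticIsolation

lemma sum_sq_le_one_of_orthonormal {α ι : Type*} [MeasurableSpace α] {μ : Measure α}
    [IsProbabilityMeasure μ] [Fintype ι] [DecidableEq ι] {φ : ι → α → ℝ}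
    (hmeas : ∀ i, AEStronglyMeasurable (φ i) μ)
    (horth : ∀ i j, ∫ x, φ i x * φ j x ∂μ = if i = j then (1 : ℝ) else 0) (a : ι → ℝ)
    (hbound : ∀ᵐ x ∂μ, |∑ i, a i * φ i x| ≤ 1) : ∑ i, a i ^ 2 ≤ 1 := by
  have hL2 : ∀ i, MemLp (φ i) 2 μ := fun i => by
    refine (memLp_two_iff_integrable_sq (hmeas i)).2 (Integrable.of_integral_ne_zero ?_)
    simp [sq, horth i i]
  have hint : ∀ i j, Integrable (fun x => a i * φ i x * (a j * φ j x)) μ := fun i j => by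
    simpa [mul_mul_mul_comm] using ((hL2 i).integrable_mul (hL2 j)).const_mul (a i * a j)
  calc ∑ i, a i ^ 2 = ∫ x, (∑ i, a i * φ i x) ^ 2 ∂μ := by
        simp_rw [sq, Finset.sum_mul_sum]
        rw [integral_finsetSum _ fun i _ => integrable_finsetSum _ fun j _ => hint i j]
        refine Finset.sum_congr rfl fun i _ => ?_
        rw [integral_finsetSum _ fun j _ => hint i j]
        have hij : ∀ j, ∫ x, a i * φ i x * (a j * φ j x) ∂μ = a i * a j * if i = j then 1 else 0 :=
          fun j => by rw [← horth, ← integral_const_mul]; simp only [mul_mul_mul_comm]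
        simp [hij]
    _ ≤ ∫ _, (1 : ℝ) ∂μ := integral_mono_of_nonneg (Eventually.of_forall fun _ => sq_nonneg _)
        (integrable_const 1) (hbound.mono fun x hx => by nlinarith [abs_le.1 hx])
    _ = 1 := by simp

lemma EuclideanSpace.norm_toLp_eq_sqrt {ι : Type*} [Fintype ι] (v : ι → ℝ) :
    ‖WithLp.toLp 2 v‖ = √(∑ i, v i ^ 2) := by
  simp [EuclideanSpace.norm_eq]

lemma sum_mul_sub_le_of_sqrt_sum_sq_le {ι : Type*} [Fintype ι] {a u v y : ι → ℝ} {δ : ℝ}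
    (ha : ∑ i, a i ^ 2 ≤ 1) (hu : √(∑ i, (u i - y i) ^ 2) ≤ δ)
    (hv : √(∑ i, (v i - y i) ^ 2) ≤ δ) : ∑ i, a i * (u i - v i) ≤ 2 * δ := by
  set U := WithLp.toLp 2 (u - y)
  set V := WithLp.toLp 2 (v - y)
  set A := WithLp.toLp 2 a
  have hA : ‖A‖ ≤ 1 := by
    rw [EuclideanSpace.norm_toLp_eq_sqrt]; exact Real.sqrt_le_one.2 ha
  calc ∑ i, a i * (u i - v i) = inner ℝ (U - V) A := by
        simp [U, V, A, PiLp.inner_apply]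
    _ ≤ ‖U - V‖ * ‖A‖ := real_inner_le_norm _ _
    _ ≤ (‖U‖ + ‖V‖) * 1 := by gcongr; exact norm_sub_le U V
    _ ≤ 2 * δ := by
        rw [EuclideanSpace.norm_toLp_eq_sqrt, EuclideanSpace.norm_toLp_eq_sqrt]
        simp only [Pi.sub_apply]
        linarith

section Blasso

variable {n T : ℕ} {K : Set (EuclideanSpace ℝ (Fin n))} {φ : Fin T → MvPolynomial (Fin n) ℝ}
  {y : Fin T → ℝ} {δ : ℝ}

lemma sint_discSM (Z : Finset (EuclideanSpace ℝ (Fin n))) (w : EuclideanSpace ℝ (Fin n) → ℝ)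
    (h : EuclideanSpace ℝ (Fin n) → ℝ) : sint (discSM Z w) h = ∑ z ∈ Z, w z * h z :=
  sint_sum_dirac Z w h

lemma blassoFeasible_discSM {X : Finset (EuclideanSpace ℝ (Fin n))}
    {c : EuclideanSpace ℝ (Fin n) → ℝ} {ε : Fin T → ℝ} (hK : MeasurableSet K) (hXK : ↑X ⊆ K)
    (hy : ∀ i, y i = (∑ x ∈ X, c x * peval (φ i) x) + ε i) (hε : √(∑ i, ε i ^ 2) ≤ δ) :
    BlassoFeasible K φ y δ (discSM X c) := by
  refine ⟨totalVariation_sum_dirac_compl hK hXK c, ?_⟩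
  simpa [sint_discSM, hy] using hε

lemma sum_abs_sub_mul_le_of_certificate {X Z : Finset (EuclideanSpace ℝ (Fin n))}
    {c w q : EuclideanSpace ℝ (Fin n) → ℝ} {a : Fin T → ℝ}
    (hq : ∀ z, q z = ∑ i, a i * peval (φ i) z) (ha : ∑ i, a i ^ 2 ≤ 1)
    (hqX : ∀ x ∈ X, q x = 1) (hc : ∀ x, 0 ≤ c x)
    (hμ : BlassoFeasible K φ y δ (discSM X c)) (hΔ : BlassoFeasible K φ y δ (discSM Z w))
    (hmin : tvNorm (discSM Z w) ≤ tvNorm (discSM X c)) :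
    ∑ z ∈ Z, (|w z| - w z * q z) ≤ 2 * δ := by
  have hmoment : ∀ (S : Finset (EuclideanSpace ℝ (Fin n))) (v : EuclideanSpace ℝ (Fin n) → ℝ),
      ∑ z ∈ S, v z * q z = ∑ i, a i * sint (discSM S v) (peval (φ i)) := fun S v => by
    simp only [hq, sint_discSM, Finset.mul_sum]
    rw [Finset.sum_comm]
    exact Finset.sum_congr rfl fun i _ => Finset.sum_congr rfl fun z _ => by ring
  have htvX : tvNorm (discSM X c) = ∑ x ∈ X, c x * q x := by
    rw [discSM, tvNorm_sum_dirac]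
    exact Finset.sum_congr rfl fun x hx => by rw [abs_of_nonneg (hc x), hqX x hx, mul_one]
  calc ∑ z ∈ Z, (|w z| - w z * q z)
      = tvNorm (discSM Z w) - ∑ z ∈ Z, w z * q z := by
        rw [Finset.sum_sub_distrib, discSM, tvNorm_sum_dirac]
    _ ≤ ∑ x ∈ X, c x * q x - ∑ z ∈ Z, w z * q z := by rw [← htvX]; linarith
    _ = ∑ i, a i * (sint (discSM X c) (peval (φ i)) - sint (discSM Z w) (peval (φ i))) := by
        simp only [hmoment, mul_sub, Finset.sum_sub_distrib]
    _ ≤ 2 * δ := sum_mul_sub_le_of_sqrt_sum_sq_le ha hμ.2 hΔ.2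

end Blasso

section Localization

variable {E : Type*} {Z : Finset E} {w q D : E → ℝ} {Ca Cb δ : ℝ}

lemma localization_of_sum_abs_sub_mul_le (hCa : 0 < Ca) (hCb : 0 < Cb)
    (hq : ∀ z ∈ Z, 0 ≤ q z) (hgap : ∀ z ∈ Z, Ca * D z ^ 2 ≤ 1 - q z)
    (hsum : ∑ z ∈ Z, (|w z| - w z * q z) ≤ 2 * δ) :
    (∀ z ∈ Z, 2 * δ / Cb < w z → D z ≤ √(Cb / Ca)) ∧
    (∑ z ∈ Z, (if D z ≤ √(Cb / Ca) ∧ 0 < w z then w z * D z ^ 2 else 0)) ≤ 2 * δ / Ca ∧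
    (∑ z ∈ Z, (if √(Cb / Ca) ≤ D z ∧ 0 < w z then w z else 0)) ≤ 2 * δ / Cb ∧
    (∑ z ∈ Z, (if w z < 0 then |w z| else 0)) ≤ 2 * δ := by
  have hq1 : ∀ z ∈ Z, q z ≤ 1 := fun z hz => by nlinarith [hgap z hz, sq_nonneg (D z)]
  have hterm : ∀ z ∈ Z, 0 ≤ |w z| - w z * q z := fun z hz => by
    rcases le_total 0 (w z) with hw | hw
    · rw [abs_of_nonneg hw]; nlinarith [hq1 z hz]
    · rw [abs_of_nonpos hw]; nlinarith [hq z hz]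
  have hpos : ∀ z ∈ Z, 0 < w z → w z * (Ca * D z ^ 2) ≤ |w z| - w z * q z := fun z hz hw => by
    rw [abs_of_pos hw]; nlinarith [hgap z hz]
  have hfar : ∀ z, √(Cb / Ca) ≤ D z → Cb ≤ Ca * D z ^ 2 := fun z hz => by
    rw [← div_le_iff₀' hCa, ← Real.sq_sqrt (div_pos hCb hCa).le]
    exact pow_le_pow_left₀ (Real.sqrt_nonneg _) hz 2
  have hδ : 0 ≤ 2 * δ := (Finset.sum_nonneg hterm).trans hsum
  have hbound : ∀ g : E → ℝ, (∀ z ∈ Z, g z ≤ |w z| - w z * q z) → ∑ z ∈ Z, g z ≤ 2 * δ :=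
    fun g hg => (Finset.sum_le_sum hg).trans hsum
  refine ⟨fun z hz hw => ?_, ?_, ?_, ?_⟩
  · by_contra! hD
    have hw0 : 0 < w z := (div_nonneg hδ hCb.le).trans_lt hw
    have : w z * Cb ≤ 2 * δ := calc
      w z * Cb ≤ w z * (Ca * D z ^ 2) := by gcongr; exact hfar z hD.le
      _ ≤ |w z| - w z * q z := hpos z hz hw0
      _ ≤ 2 * δ := (Finset.single_le_sum hterm hz).trans hsum
    rw [div_lt_iff₀ hCb] at hw
    linarith
  · rw [le_div_iff₀' hCa, Finset.mul_sum]
    refine hbound _ fun z hz => ?_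
    split_ifs with h
    · nlinarith [hpos z hz h.2]
    · simpa using hterm z hz
  · rw [le_div_iff₀' hCb, Finset.mul_sum]
    refine hbound _ fun z hz => ?_
    split_ifs with h
    · nlinarith [hpos z hz h.2, hfar z h.1]
    · simpa using hterm z hz
  · refine hbound _ fun z hz => ?_
    split_ifs with h
    · rw [abs_of_neg h]; nlinarith [hq z hz]
    · exact hterm z hz

end Localization

theorem blasso_localization_of_QIC_general {n : ℕ}
    (K : Set (EuclideanSpace ℝ (Fin n))) (hK : IsCompact K)
    (X : Finset (EuclideanSpace ℝ (Fin n))) (hXK : ↑X ⊆ K)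
    (g : ℕ) (s : ℕ) (f : Fin s → MvPolynomial (Fin n) ℝ)
    (hfdeg : ∀ i, (f i).totalDegree ≤ g)
    (hfvan : ∀ i, ∀ x ∈ X, peval (f i) x = 0)
    (hfgen : ∀ q : MvPolynomial (Fin n) ℝ, (∀ x ∈ X, peval q x = 0) →
      q ∈ Ideal.span (Set.range f)) :
    ∃ Ca Cb : ℝ, 0 < Ca ∧ 0 < Cb ∧ Cb < 1 ∧
      ∀ (d : ℕ), 2 * g ≤ d →
      ∀ (τ : Measure (EuclideanSpace ℝ (Fin n))), IsProbabilityMeasure τ → τ Kᶜ = 0 →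
      ∀ (T : ℕ) (φ : Fin T → MvPolynomial (Fin n) ℝ),
        (∀ i, (φ i).totalDegree ≤ d) →
        (∀ q : MvPolynomial (Fin n) ℝ, q.totalDegree ≤ d →
          q ∈ Submodule.span ℝ (Set.range φ)) →
        (∀ i j, ∫ z, peval (φ i) z * peval (φ j) z ∂τ = if i = j then (1 : ℝ) else 0) →
      ∀ (c : EuclideanSpace ℝ (Fin n) → ℝ), (∀ x, 0 ≤ c x) →
      ∀ (δ : ℝ) (ε : Fin T → ℝ), Real.sqrt (∑ i, ε i ^ 2) ≤ δ →
      ∀ (y : Fin T → ℝ), (∀ i, y i = (∑ x ∈ X, c x * peval (φ i) x) + ε i) →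
      ∀ (Z : Finset (EuclideanSpace ℝ (Fin n))) (w : EuclideanSpace ℝ (Fin n) → ℝ),
        ↑Z ⊆ K →
        BlassoFeasible K φ y δ (discSM Z w) →
        (∀ ν : SignedMeasure (EuclideanSpace ℝ (Fin n)), BlassoFeasible K φ y δ ν →
          tvNorm (discSM Z w) ≤ tvNorm ν) →
        ((∀ z ∈ Z, 2 * δ / Cb < w z → Metric.infDist z ↑X ≤ Real.sqrt (Cb / Ca)) ∧
         (∑ z ∈ Z, (if Metric.infDist z ↑X ≤ Real.sqrt (Cb / Ca) ∧ 0 < w z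
            then w z * Metric.infDist z ↑X ^ 2 else 0)) ≤ 2 * δ / Ca ∧
         (∑ z ∈ Z, (if Real.sqrt (Cb / Ca) ≤ Metric.infDist z ↑X ∧ 0 < w z
            then w z else 0)) ≤ 2 * δ / Cb ∧
         (∑ z ∈ Z, (if w z < 0 then |w z| else 0)) ≤ 2 * δ) := by
  obtain ⟨Ca, hCa, q, hqdeg, hqX, hqK⟩ := exists_dual_certificate hK hfdeg hfvan hfgen
  -- the gap `1 - q ≥ C_a d(·, X)²` holds on all of `K`, so any `C_b ∈ (0, 1)` will do
  refine ⟨Ca, 1 / 2, hCa, by norm_num, by norm_num, ?_⟩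
  intro d hd τ hτ hτK T φ _ hφspan hφorth c hc δ ε hε y hy Z w hZK hΔ hmin
  obtain ⟨a, ha⟩ := (Submodule.mem_span_range_iff_exists_fun ℝ).1 (hφspan q (hqdeg.trans hd))
  have hqφ : ∀ z, peval q z = ∑ i, a i * peval (φ i) z := fun z => by simp [← ha, peval]
  have hnorm : ∑ i, a i ^ 2 ≤ 1 := by
    refine sum_sq_le_one_of_orthonormal (fun i => (continuous_peval (φ i)).aestronglyMeasurable)
      hφorth a (Eventually.mono (mem_ae_iff.2 hτK : ∀ᵐ z ∂τ, z ∈ K) fun z hz => ?_)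
    rw [← hqφ, abs_le]
    constructor <;> nlinarith [hqK z hz, sq_nonneg (Metric.infDist z X)]
  have hμ := blassoFeasible_discSM hK.isClosed.measurableSet hXK hy hε
  have hsum := sum_abs_sub_mul_le_of_certificate hqφ hnorm hqX hc hμ hΔ (hmin _ hμ)
  exact localization_of_sum_abs_sub_mul_le hCa one_half_pos (fun z hz => (hqK z (hZK hz)).1)
    (fun z hz => (hqK z (hZK hz)).2) hsum

/-- **Quantitative localization from a quadratic isolation condition**: let `K ⊆ ℝⁿ`
be compact and `X ⊆ K` finite nonempty with vanishing ideal generated in degree `≤ g`.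
There are constants `C_a > 0`, `0 < C_b < 1` depending only on `X` (and `K` and the
generators) such that, for every `d ≥ 2g`, every `L²(τ)`-orthonormal basis `φ` of the
polynomials of degree `≤ d`, every positive discrete measure `μ` supported on `X`,
every noise `ε` with `‖ε‖₂ ≤ δ`, and every discrete signed measure `Δ̂ = Σ_z Δ̂(z) δ_z`
minimizing the TV norm subject to `‖(∫ φᵢ dν − yᵢ)ᵢ‖₂ ≤ δ`, with `c₀ = √(C_b/C_a)`:
(1) every atom with `Δ̂(z) > 2δ/C_b` is within `c₀` of `X`; (2) the stated bounds on
near spikes, far spikes, and negative spikes hold. -/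
theorem blasso_localization_of_QIC {n : ℕ}
    (K : Set (EuclideanSpace ℝ (Fin n))) (hK : IsCompact K)
    (X : Finset (EuclideanSpace ℝ (Fin n))) (hXne : X.Nonempty) (hXK : ↑X ⊆ K)
    (g : ℕ) (s : ℕ) (f : Fin s → MvPolynomial (Fin n) ℝ)
    (hfdeg : ∀ i, (f i).totalDegree ≤ g)
    (hfvan : ∀ i, ∀ x ∈ X, peval (f i) x = 0)
    (hfgen : ∀ q : MvPolynomial (Fin n) ℝ, (∀ x ∈ X, peval q x = 0) →
      q ∈ Ideal.span (Set.range f)) :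
    ∃ Ca Cb : ℝ, 0 < Ca ∧ 0 < Cb ∧ Cb < 1 ∧
      ∀ (d : ℕ), 2 * g ≤ d →
      ∀ (τ : Measure (EuclideanSpace ℝ (Fin n))), IsProbabilityMeasure τ → τ Kᶜ = 0 →
      ∀ (T : ℕ) (φ : Fin T → MvPolynomial (Fin n) ℝ),
        (∀ i, (φ i).totalDegree ≤ d) →
        (∀ q : MvPolynomial (Fin n) ℝ, q.totalDegree ≤ d →
          q ∈ Submodule.span ℝ (Set.range φ)) →
        (∀ i j, ∫ z, peval (φ i) z * peval (φ j) z ∂τ = if i = j then (1 : ℝ) else 0) →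
      ∀ (c : EuclideanSpace ℝ (Fin n) → ℝ), (∀ x, 0 ≤ c x) →
      ∀ (δ : ℝ) (ε : Fin T → ℝ), Real.sqrt (∑ i, ε i ^ 2) ≤ δ →
      ∀ (y : Fin T → ℝ), (∀ i, y i = (∑ x ∈ X, c x * peval (φ i) x) + ε i) →
      ∀ (Z : Finset (EuclideanSpace ℝ (Fin n))) (w : EuclideanSpace ℝ (Fin n) → ℝ),
        ↑Z ⊆ K →
        BlassoFeasible K φ y δ (discSM Z w) →
        (∀ ν : SignedMeasure (EuclideanSpace ℝ (Fin n)), BlassoFeasible K φ y δ ν →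
          tvNorm (discSM Z w) ≤ tvNorm ν) →
        ((∀ z ∈ Z, 2 * δ / Cb < w z → Metric.infDist z ↑X ≤ Real.sqrt (Cb / Ca)) ∧
         (∑ z ∈ Z, (if Metric.infDist z ↑X ≤ Real.sqrt (Cb / Ca) ∧ 0 < w z
            then w z * Metric.infDist z ↑X ^ 2 else 0)) ≤ 2 * δ / Ca ∧
         (∑ z ∈ Z, (if Real.sqrt (Cb / Ca) ≤ Metric.infDist z ↑X ∧ 0 < w z
            then w z else 0)) ≤ 2 * δ / Cb ∧
         (∑ z ∈ Z, (if w z < 0 then |w z| else 0)) ≤ 2 * δ) :=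
  blasso_localization_of_QIC_general K hK X hXK g s f hfdeg hfvan hfgen
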